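/- arXiv:2007.03998 — 3 statements merged into one kernel-verified Lean document; each statement's English description precedes it below -/
import Mathlib

section
/- For every real number α with 1/2 ≤ α ≤ 3/4, the function f(x) = (2 + x^α)/(1 + x) is nonincreasing on the interval [3, ∞): for all real numbers x, y with 3 ≤ x ≤ y, one has (2 + y^α)/(1 + y) ≤ (2 + x^α)/(1 + x). -/
/-! For `α ≤ 1` and `1 ≤ x ≤ y`, cross-multiplying reduces the claim to two estimates:
`t ↦ t ^ α` grows no faster than `t` on `[1, ∞)`, so `y ^ α - x ^ α ≤ y - x`, and
`t ↦ t ^ (α - 1)` is antitone, so `x * y ^ α ≤ y * x ^ α`. -/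

open Set

lemma rpow_sub_rpow_le_sub_of_one_le {α x y : ℝ} (hα : α ≤ 1) (hx : 1 ≤ x) (hxy : x ≤ y) :
    y ^ α - x ^ α ≤ y - x := by
  have hx0 : 0 < x := by linarith
  have hyx : 1 ≤ y / x := (one_le_div hx0).2 hxy
  calc y ^ α - x ^ α = x ^ α * ((y / x) ^ α - 1) := by
        rw [Real.div_rpow (by linarith) hx0.le, mul_sub, mul_div_cancel₀ _ (by positivity)]
        ring
    _ ≤ x ^ α * (y / x - 1) := by
        gcongr
        exact Real.rpow_le_self_of_one_le hyx hα
    _ ≤ x * (y / x - 1) :=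
        mul_le_mul_of_nonneg_right (Real.rpow_le_self_of_one_le hx hα) (by linarith)
    _ = y - x := by field_simp

lemma mul_rpow_le_mul_rpow {α x y : ℝ} (hα : α ≤ 1) (hx : 0 < x) (hxy : x ≤ y) :
    x * y ^ α ≤ y * x ^ α := by
  have hy : 0 < y := hx.trans_le hxy
  have h := Real.rpow_le_rpow_of_nonpos hx hxy (sub_nonpos.2 hα)
  rw [Real.rpow_sub_one hy.ne', Real.rpow_sub_one hx.ne', div_le_div_iff₀ hy hx] at h
  linarith

lemma antitoneOn_add_rpow_div_one_add {α c : ℝ} (hα : α ≤ 1) (hc : 1 ≤ c) :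
    AntitoneOn (fun t : ℝ => (c + t ^ α) / (1 + t)) (Ici 1) := by
  intro x (hx : 1 ≤ x) y (hy : 1 ≤ y) hxy
  have hgrowth := rpow_sub_rpow_le_sub_of_one_le hα hx hxy
  have hcross := mul_rpow_le_mul_rpow hα (by linarith) hxy
  have hc' : 0 ≤ (c - 1) * (y - x) := mul_nonneg (by linarith) (by linarith)
  rw [div_le_div_iff₀ (by linarith) (by linarith)]
  linarith

theorem antitone_on_ratio_general (α : ℝ) (hα₂ : α ≤ 3 / 4)
    (x y : ℝ) (hx : 3 ≤ x) (hxy : x ≤ y) :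
    (2 + y ^ α) / (1 + y) ≤ (2 + x ^ α) / (1 + x) :=
  antitoneOn_add_rpow_div_one_add (by linarith) one_le_two
    (mem_Ici.2 (by linarith)) (mem_Ici.2 (by linarith)) hxy

/-- For `1/2 ≤ α ≤ 3/4`, the function `x ↦ (2 + x^α)/(1 + x)` is nonincreasing on `[3, ∞)`. -/
theorem antitone_on_ratio (α : ℝ) (hα₁ : 1 / 2 ≤ α) (hα₂ : α ≤ 3 / 4)
    (x y : ℝ) (hx : 3 ≤ x) (hxy : x ≤ y) :
    (2 + y ^ α) / (1 + y) ≤ (2 + x ^ α) / (1 + x) :=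
  antitone_on_ratio_general α hα₂ x y hx hxy
end

section
/- Let N be an odd squarefree integer with ω(N) = 7 such that the smallest prime factor of N is at least 5 or the largest prime factor of N is greater than 73. Then (10/(3π)) · ( ∏_{p prime, p ∣ N} (2 + p^{3/4})/(1 + p) + 3 · ∏_{p prime, p ∣ N} (2 + p^{1/2})/(1 + p) ) < 1/12. -/
open Finset Real

/-!
The factors `(2 + p ^ a) / (1 + p)` with `a ≤ 1` are nonnegative and decreasing for `p ≥ 1`.
Hence, by an exchange argument, among sets of primes of a given size whose elements are at least
`lo`, the product of these factors is largest for the set of the smallest primes `≥ lo`. This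
bounds the left-hand side by its value at `{5, 7, 11, 13, 17, 19, 23}`, respectively (removing
the prime factor `> 73`, which is at least `79`) at `{79, 3, 5, 7, 11, 13, 17}`. There, upper
bounds for `p ^ (3/4)` and `p ^ (1/2)` checked on integer powers, together with `π > 3.14`,
leave an inequality between rational numbers.
-/

section

variable {ι R : Type*} [CommSemiring R] [LinearOrder R] [IsOrderedRing R] {s t : Finset ι}
  {f : ι → R}

theorem prod_le_prod_of_card_eq_of_forall_le (hcard : #s = #t) (h0 : ∀ i ∈ s, 0 ≤ f i)
    (hle : ∀ i ∈ s, ∀ j ∈ t, f i ≤ f j) : ∏ i ∈ s, f i ≤ ∏ j ∈ t, f j := by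
  rcases s.eq_empty_or_nonempty with rfl | ⟨i₀, hi₀⟩
  · rw [card_empty, eq_comm, card_eq_zero] at hcard
    simp [hcard]
  set c := s.sup' ⟨i₀, hi₀⟩ f
  calc ∏ i ∈ s, f i ≤ ∏ _i ∈ s, c := prod_le_prod h0 fun i hi => le_sup' f hi
    _ = ∏ _j ∈ t, c := by rw [prod_const, prod_const, hcard]
    _ ≤ ∏ j ∈ t, f j :=
      prod_le_prod (fun _ _ => (h0 i₀ hi₀).trans (le_sup' f hi₀))
        fun j hj => sup'_le _ f fun i hi => hle i hi j hj

theorem prod_le_prod_of_forall_sdiff_le [DecidableEq ι] (hcard : #s = #t)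
    (h0 : ∀ i ∈ s, 0 ≤ f i) (hle : ∀ i ∈ s \ t, ∀ j ∈ t \ s, f i ≤ f j) :
    ∏ i ∈ s, f i ≤ ∏ j ∈ t, f j := by
  have hcard' : #(s \ t) = #(t \ s) := by
    have := card_sdiff_add_card_inter s t
    have := card_sdiff_add_card_inter t s
    rw [inter_comm] at this
    omega
  rw [← prod_inter_mul_prod_sdiff s t, ← prod_inter_mul_prod_sdiff t s, inter_comm t s]
  exact mul_le_mul_of_nonneg_left
    (prod_le_prod_of_card_eq_of_forall_le hcard' (fun i hi => h0 i (mem_sdiff.1 hi).1) hle)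
    (prod_nonneg fun i hi => h0 i (mem_inter.1 hi).1)

end

section

variable {R : Type*} [CommSemiring R] [LinearOrder R] [IsOrderedRing R] {f : ℕ → R}

theorem prod_le_prod_primes_Icc (hf : AntitoneOn f (Set.Ici 1)) (hf0 : ∀ n, 0 ≤ f n)
    {S : Finset ℕ} {lo hi : ℕ} (hS : ∀ p ∈ S, p.Prime ∧ lo ≤ p)
    (hcard : #S = #{q ∈ Icc lo hi | q.Prime}) :
    ∏ p ∈ S, f p ≤ ∏ q ∈ Icc lo hi with q.Prime, f q := by
  refine prod_le_prod_of_forall_sdiff_le hcard (fun _ _ => hf0 _) fun p hp q hq => ?_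
  obtain ⟨hpS, hpT⟩ := mem_sdiff.1 hp
  obtain ⟨hp, hlo⟩ := hS p hpS
  obtain ⟨⟨-, hq_hi⟩, hq⟩ := by simpa using (mem_sdiff.1 hq).1
  have hhi : hi < p := by
    by_contra! hp_hi
    exact hpT (mem_filter.2 ⟨mem_Icc.2 ⟨hlo, hp_hi⟩, hp⟩)
  exact hf (Set.mem_Ici.2 hq.one_lt.le) (Set.mem_Ici.2 hp.one_lt.le) (by omega)

theorem prod_primeFactors_le_of_five_le (hf : AntitoneOn f (Set.Ici 1)) (hf0 : ∀ n, 0 ≤ f n)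
    {N : ℕ} (hω : #N.primeFactors = 7)
    (h5 : ∀ p ∈ N.primeFactors, 5 ≤ p) :
    ∏ p ∈ N.primeFactors, f p ≤ ∏ q ∈ {5, 7, 11, 13, 17, 19, 23}, f q := by
  have hT : ({5, 7, 11, 13, 17, 19, 23} : Finset ℕ) = {q ∈ Icc 5 23 | q.Prime} := by decide
  rw [hT]
  exact prod_le_prod_primes_Icc hf hf0
    (fun p hp => ⟨Nat.prime_of_mem_primeFactors hp, h5 p hp⟩) (by rw [hω, ← hT]; rfl)

theorem prod_primeFactors_le_of_odd (hf : AntitoneOn f (Set.Ici 1)) (hf0 : ∀ n, 0 ≤ f n)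
    {N P : ℕ} (hodd : Odd N) (hω : #N.primeFactors = 7)
    (hP : P ∈ N.primeFactors) (hP73 : 73 < P) :
    ∏ p ∈ N.primeFactors, f p ≤ ∏ q ∈ {79, 3, 5, 7, 11, 13, 17}, f q := by
  have hT : ({3, 5, 7, 11, 13, 17} : Finset ℕ) = {q ∈ Icc 3 17 | q.Prime} := by decide
  have h79 : 79 ≤ P := by
    have hPp := Nat.prime_of_mem_primeFactors hP
    by_contra!
    interval_cases P <;> norm_num at hPp
  have hS : ∀ p ∈ N.primeFactors.erase P, p.Prime ∧ 3 ≤ p := fun p hp => by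
    have hpN := mem_of_mem_erase hp
    have hp := Nat.prime_of_mem_primeFactors hpN
    have hp_odd := Nat.odd_iff.1 (hodd.of_dvd_nat (Nat.dvd_of_mem_primeFactors hpN))
    exact ⟨hp, by have := hp.two_le; omega⟩
  rw [← mul_prod_erase _ _ hP, prod_insert (by decide), hT]
  exact mul_le_mul (hf (by simp) (by simp; omega) h79)
    (prod_le_prod_primes_Icc hf hf0 hS (by rw [card_erase_of_mem hP, hω, ← hT]; rfl))
    (prod_nonneg fun _ _ => hf0 _) (hf0 _)

end

noncomputable def keyFactor (a x : ℝ) : ℝ := (2 + x ^ a) / (1 + x)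

theorem keyFactor_nonneg (a : ℝ) {x : ℝ} (hx : 0 ≤ x) : 0 ≤ keyFactor a x := by
  unfold keyFactor
  positivity

theorem keyFactor_antitoneOn {a : ℝ} (ha : a ≤ 1) : AntitoneOn (keyFactor a) (Set.Ici 1) := by
  intro x (hx : 1 ≤ x) y (hy : 1 ≤ y) hxy
  have hx_pow : x ^ a ≤ x := by simpa using rpow_le_rpow_of_exponent_le hx ha
  have hcross : x * y ^ a ≤ y * x ^ a := by
    have := rpow_le_rpow_of_nonpos (by linarith) hxy (by linarith : a - 1 ≤ 0)
    rwa [rpow_sub_one (by positivity), rpow_sub_one (by positivity),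
      div_le_div_iff₀ (by positivity) (by positivity), mul_comm, mul_comm (x ^ a)] at this
  unfold keyFactor
  rw [div_le_div_iff₀ (by positivity) (by positivity)]
  -- `x (y^a - x^a) ≤ x^a (y - x) ≤ x (y - x)`
  nlinarith

theorem rpow_le_of_pow_le {x s a : ℝ} {m n : ℕ} (hx : 0 ≤ x) (hs : 0 ≤ s) (hn : n ≠ 0)
    (ha : a * n = m) (h : x ^ m ≤ s ^ n) : x ^ a ≤ s := by
  refine le_of_pow_le_pow_left₀ hn hs ?_
  rwa [← rpow_natCast (x ^ a), ← rpow_mul hx, ha, rpow_natCast]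

noncomputable def keySum (S : Finset ℕ) : ℝ :=
  10 / (3 * π) * (∏ p ∈ S, keyFactor (3 / 4) p + 3 * ∏ p ∈ S, keyFactor (1 / 2) p)

theorem keySum_le_keySum {S T : Finset ℕ}
    (h : ∀ f : ℕ → ℝ, AntitoneOn f (Set.Ici 1) → (∀ n, 0 ≤ f n) →
      ∏ p ∈ S, f p ≤ ∏ p ∈ T, f p) :
    keySum S ≤ keySum T := by
  have key (a : ℝ) (ha : a ≤ 1) := h (fun n => keyFactor a n)
    (fun m hm n hn hmn => keyFactor_antitoneOn ha (Set.mem_Ici.2 (Nat.one_le_cast.2 hm))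
      (Set.mem_Ici.2 (Nat.one_le_cast.2 hn)) (Nat.cast_le.2 hmn))
    fun n => keyFactor_nonneg a n.cast_nonneg
  unfold keySum
  gcongr 10 / (3 * π) * (?_ + 3 * ?_) <;> exact key _ (by norm_num)

theorem keySum_five_to_23_lt : keySum {5, 7, 11, 13, 17, 19, 23} < 1 / 12 := by
  simp (disch := decide) only [keySum, keyFactor, prod_insert, prod_singleton, Nat.cast_ofNat]
  calc _ ≤ (10 : ℝ) / (3 * 3.14) *
          (((2 + 3.35) / (1 + 5) * ((2 + 4.31) / (1 + 7) * ((2 + 6.05) / (1 + 11) *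
            ((2 + 6.85) / (1 + 13) * ((2 + 8.38) / (1 + 17) * ((2 + 9.11) / (1 + 19) *
              ((2 + 10.51) / (1 + 23)))))))) +
            3 * ((2 + 2.24) / (1 + 5) * ((2 + 2.65) / (1 + 7) * ((2 + 3.32) / (1 + 11) *
              ((2 + 3.61) / (1 + 13) * ((2 + 4.13) / (1 + 17) * ((2 + 4.36) / (1 + 19) *
                ((2 + 4.8) / (1 + 23))))))))) := by
        gcongr
        all_goals first
          | exact pi_gt_d2.le
          | apply rpow_le_of_pow_le (a := 3 / 4) (m := 3) (n := 4) <;> norm_num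
          | apply rpow_le_of_pow_le (a := 1 / 2) (m := 1) (n := 2) <;> norm_num
    _ < 1 / 12 := by norm_num

theorem keySum_three_to_17_and_79_lt : keySum {79, 3, 5, 7, 11, 13, 17} < 1 / 12 := by
  simp (disch := decide) only [keySum, keyFactor, prod_insert, prod_singleton, Nat.cast_ofNat]
  calc _ ≤ (10 : ℝ) / (3 * 3.14) *
          (((2 + 26.5) / (1 + 79) * ((2 + 2.28) / (1 + 3) * ((2 + 3.35) / (1 + 5) *
            ((2 + 4.31) / (1 + 7) * ((2 + 6.05) / (1 + 11) * ((2 + 6.85) / (1 + 13) *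
              ((2 + 8.38) / (1 + 17)))))))) +
            3 * ((2 + 8.89) / (1 + 79) * ((2 + 1.74) / (1 + 3) * ((2 + 2.24) / (1 + 5) *
              ((2 + 2.65) / (1 + 7) * ((2 + 3.32) / (1 + 11) * ((2 + 3.61) / (1 + 13) *
                ((2 + 4.13) / (1 + 17))))))))) := by
        gcongr
        all_goals first
          | exact pi_gt_d2.le
          | apply rpow_le_of_pow_le (a := 3 / 4) (m := 3) (n := 4) <;> norm_num
          | apply rpow_le_of_pow_le (a := 1 / 2) (m := 1) (n := 2) <;> norm_num
    _ < 1 / 12 := by norm_num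

theorem key_inequality_omega_eq_7_general (N : ℕ) (hodd : Odd N)
    (hω : N.primeFactors.card = 7)
    (hP : (∀ p ∈ N.primeFactors, 5 ≤ p) ∨ (∃ p ∈ N.primeFactors, 73 < p)) :
    10 / (3 * Real.pi) *
        ((∏ p ∈ N.primeFactors, (2 + (p : ℝ) ^ ((3 : ℝ) / 4)) / (1 + (p : ℝ))) +
          3 * ∏ p ∈ N.primeFactors, (2 + (p : ℝ) ^ ((1 : ℝ) / 2)) / (1 + (p : ℝ))) <
      1 / 12 := by
  change keySum N.primeFactors < 1 / 12
  rcases hP with h5 | ⟨P, hP, hP73⟩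
  · exact (keySum_le_keySum fun _ hf hf0 =>
      prod_primeFactors_le_of_five_le hf hf0 hω h5).trans_lt keySum_five_to_23_lt
  · exact (keySum_le_keySum fun _ hf hf0 =>
      prod_primeFactors_le_of_odd hf hf0 hodd hω hP hP73).trans_lt keySum_three_to_17_and_79_lt

/-- For an odd squarefree integer `N` with exactly `7` distinct prime factors whose smallest
prime factor is at least `5` or whose largest prime factor is greater than `73`, the key
inequality holds. -/
theorem key_inequality_omega_eq_7 (N : ℕ) (hodd : Odd N) (hsf : Squarefree N)
    (hω : N.primeFactors.card = 7)
    (hP : (∀ p ∈ N.primeFactors, 5 ≤ p) ∨ (∃ p ∈ N.primeFactors, 73 < p)) :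
    10 / (3 * Real.pi) *
        ((∏ p ∈ N.primeFactors, (2 + (p : ℝ) ^ ((3 : ℝ) / 4)) / (1 + (p : ℝ))) +
          3 * ∏ p ∈ N.primeFactors, (2 + (p : ℝ) ^ ((1 : ℝ) / 2)) / (1 + (p : ℝ))) <
      1 / 12 :=
  key_inequality_omega_eq_7_general N hodd hω hP
end

section
/- Let N be an odd squarefree integer with ω(N) = 5 such that the smallest prime factor of N is at least 13 or the largest prime factor of N is greater than 3373. Then (10/(3π)) · ( ∏_{p prime, p ∣ N} (2 + p^{3/4})/(1 + p) + 3 · ∏_{p prime, p ∣ N} (2 + p^{1/2})/(1 + p) ) < 1/12. -/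
/-!
Each factor `(2 + p ^ r) / (1 + p)` with `r ≤ 1` decreases in `p` on `[1, ∞)`, so both products
are largest when the prime factors are as small as the hypotheses allow. Since the prime factors
are distinct odd primes, the `i`-th smallest one is at least the `i`-th odd prime of the allowed
range: `13, 17, 19, 23, 29` in the first case, and `3, 5, 7, 11` next to one prime `≥ 3374` in the
second. Bounding the finitely many real powers that occur by decimals gives
`∏ ≤ 0.0663` for `r = 3/4` and `∏ ≤ 0.00302` for `r = 1/2`, and
`10 / (3π) · (0.0663 + 3 · 0.00302) < 1/12` already for `π > 3.14`.
-/

open Finset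

noncomputable def weight (r x : ℝ) : ℝ := (2 + x ^ r) / (1 + x)

lemma weight_nonneg (r : ℝ) {x : ℝ} (hx : 0 ≤ x) : 0 ≤ weight r x := by
  unfold weight; positivity

lemma weight_le_of_rpow_le {r x c : ℝ} (hx : 0 ≤ x) (h : x ^ r ≤ c) :
    weight r x ≤ (2 + c) / (1 + x) := by
  unfold weight; gcongr

lemma weight_antitoneOn {r : ℝ} (hr : r ≤ 1) : AntitoneOn (weight r) (Set.Ici 1) := by
  intro a (ha : 1 ≤ a) b _ hab
  have ha0 : 0 < a := by linarith
  have har : a ^ r ≤ a := by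
    simpa using Real.rpow_le_rpow_of_exponent_le ha hr
  -- `x ↦ x ^ (r - 1)` is antitone, so `x ↦ x ^ r / x` is too
  have hcross : a * b ^ r ≤ a ^ r * b := by
    have := Real.rpow_le_rpow_of_nonpos ha0 hab (sub_nonpos.2 hr)
    rw [Real.rpow_sub_one (ha0.trans_le hab).ne', Real.rpow_sub_one ha0.ne'] at this
    rwa [div_le_div_iff₀ (by linarith) ha0, mul_comm] at this
  unfold weight
  rw [div_le_div_iff₀ (by linarith) (by linarith)]
  nlinarith [mul_nonneg (sub_nonneg.2 har) (sub_nonneg.2 hab)]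

lemma rpow_div_le_of_pow_le {x c : ℝ} {m n : ℕ} (hx : 0 ≤ x) (hc : 0 ≤ c) (hn : n ≠ 0)
    (h : x ^ m ≤ c ^ n) : x ^ ((m : ℝ) / n) ≤ c := by
  rw [div_eq_mul_inv, Real.rpow_mul hx, Real.rpow_natCast,
    Real.rpow_inv_le_iff_of_pos (by positivity) hc (by positivity)]
  exact_mod_cast h

lemma le_orderEmbOfFin {α : Type*} [LinearOrder α] {s : Finset α} {n : ℕ}
    (h : s.card = n + 1) {P : α → Prop} (hs : ∀ x ∈ s, P x) {m : Fin (n + 1) → α}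
    (h0 : ∀ x, P x → m 0 ≤ x)
    (hsucc : ∀ (i : Fin n) x, P x → m i.castSucc < x → m i.succ ≤ x)
    (i : Fin (n + 1)) : m i ≤ s.orderEmbOfFin h i := by
  induction i using Fin.induction with
  | zero => exact h0 _ (hs _ (s.orderEmbOfFin_mem h 0))
  | succ i ih =>
    exact hsucc i _ (hs _ (s.orderEmbOfFin_mem h _))
      (ih.trans_lt ((s.orderEmbOfFin h).strictMono i.castSucc_lt_succ))

lemma prod_weight_le {s : Finset ℕ} {k : ℕ} (h : s.card = k) {r : ℝ} (hr : r ≤ 1)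
    {m : Fin k → ℕ} (hm1 : ∀ i, 1 ≤ m i) (hm : ∀ i, m i ≤ s.orderEmbOfFin h i)
    {c : Fin k → ℝ} (hc : ∀ i, (m i : ℝ) ^ r ≤ c i) :
    ∏ p ∈ s, weight r p ≤ ∏ i, (2 + c i) / (1 + m i) := by
  rw [← s.map_orderEmbOfFin_univ h, prod_map]
  refine prod_le_prod (fun i _ => weight_nonneg r (Nat.cast_nonneg _)) fun i _ => ?_
  have hm1' : (1 : ℝ) ≤ m i := by exact_mod_cast hm1 i
  calc weight r (s.orderEmbOfFin h i)
      ≤ weight r (m i) :=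
        weight_antitoneOn hr hm1' (hm1'.trans (by exact_mod_cast hm i)) (by exact_mod_cast hm i)
    _ ≤ (2 + c i) / (1 + m i) := weight_le_of_rpow_le (Nat.cast_nonneg _) (hc i)

lemma prod_weight_le_of_forall_thirteen_le {s : Finset ℕ} (h : s.card = 5)
    (hs : ∀ p ∈ s, p.Prime ∧ Odd p ∧ 13 ≤ p) :
    ∏ p ∈ s, weight (3 / 4) p ≤ 0.051 ∧ ∏ p ∈ s, weight (1 / 2) p ≤ 0.00302 := by
  have hm := le_orderEmbOfFin h hs (m := ![13, 17, 19, 23, 29]) (fun x hx => hx.2.2) <| by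
    intro i x ⟨hp, hodd, _⟩ hlt
    by_contra! hx
    fin_cases i <;>
      simp only [Fin.reduceFinMk, Fin.reduceCastSucc, Fin.reduceSucc, Matrix.cons_val] at hlt hx <;>
      interval_cases x <;> exact absurd (And.intro hp hodd) (by decide)
  constructor
  · refine (prod_weight_le h (by norm_num) (by decide) hm
      (c := ![6.8464, 8.3722, 9.1005, 10.5026, 12.4968]) fun i => ?_).trans ?_
    · fin_cases i <;> simpa using rpow_div_le_of_pow_le (m := 3) (n := 4)
        (by norm_num) (by norm_num) (by norm_num) (by norm_num)
    · norm_num [Fin.prod_univ_five, Matrix.cons_val_two, Matrix.cons_val_three,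
        Matrix.cons_val_four]
  · refine (prod_weight_le h (by norm_num) (by decide) hm
      (c := ![3.6056, 4.1232, 4.3589, 4.7959, 5.3852]) fun i => ?_).trans ?_
    · fin_cases i <;> simpa using rpow_div_le_of_pow_le (m := 1) (n := 2)
        (by norm_num) (by norm_num) (by norm_num) (by norm_num)
    · norm_num [Fin.prod_univ_five, Matrix.cons_val_two, Matrix.cons_val_three,
        Matrix.cons_val_four]

lemma prod_weight_le_of_odd_prime {s : Finset ℕ} (h : s.card = 4)
    (hs : ∀ p ∈ s, p.Prime ∧ Odd p) :
    ∏ p ∈ s, weight (3 / 4) p ≤ 0.5031 ∧ ∏ p ∈ s, weight (1 / 2) p ≤ 0.1695 := by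
  have hm := le_orderEmbOfFin h hs (m := ![3, 5, 7, 11])
      (fun x ⟨hp, k, hk⟩ => by have := hp.two_le; change 3 ≤ x; omega) <| by
    intro i x ⟨hp, hodd⟩ hlt
    by_contra! hx
    fin_cases i <;>
      simp only [Fin.reduceFinMk, Fin.reduceCastSucc, Fin.reduceSucc, Matrix.cons_val] at hlt hx <;>
      interval_cases x <;> exact absurd (And.intro hp hodd) (by decide)
  constructor
  · refine (prod_weight_le h (by norm_num) (by decide) hm
      (c := ![2.2796, 3.3438, 4.3036, 6.0402]) fun i => ?_).trans ?_
    · fin_cases i <;> simpa using rpow_div_le_of_pow_le (m := 3) (n := 4)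
        (by norm_num) (by norm_num) (by norm_num) (by norm_num)
    · norm_num [Fin.prod_univ_four, Matrix.cons_val_two, Matrix.cons_val_three]
  · refine (prod_weight_le h (by norm_num) (by decide) hm
      (c := ![1.7321, 2.2361, 2.6458, 3.3167]) fun i => ?_).trans ?_
    · fin_cases i <;> simpa using rpow_div_le_of_pow_le (m := 1) (n := 2)
        (by norm_num) (by norm_num) (by norm_num) (by norm_num)
    · norm_num [Fin.prod_univ_four, Matrix.cons_val_two, Matrix.cons_val_three]

lemma weight_le_of_3374_le {q : ℝ} (hq : 3374 ≤ q) :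
    weight (3 / 4) q ≤ 444.70 / 3375 ∧ weight (1 / 2) q ≤ 60.087 / 3375 := by
  have hmono {r : ℝ} (hr : r ≤ 1) : weight r q ≤ weight r 3374 :=
    weight_antitoneOn hr (by norm_num : (1 : ℝ) ≤ 3374) (Set.mem_Ici.2 (by linarith)) hq
  constructor
  · refine (hmono (by norm_num)).trans <|
      (weight_le_of_rpow_le (c := 442.70) (by norm_num) ?_).trans (by norm_num)
    simpa using rpow_div_le_of_pow_le (m := 3) (n := 4)
      (by norm_num) (by norm_num) (by norm_num) (by norm_num)
  · refine (hmono (by norm_num)).trans <|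
      (weight_le_of_rpow_le (c := 58.087) (by norm_num) ?_).trans (by norm_num)
    simpa using rpow_div_le_of_pow_le (m := 1) (n := 2)
      (by norm_num) (by norm_num) (by norm_num) (by norm_num)

lemma prod_weight_le_of_mem_of_3374_le {s : Finset ℕ} (h : s.card = 5)
    (hs : ∀ p ∈ s, p.Prime ∧ Odd p) {q : ℕ} (hq : q ∈ s) (hq3374 : 3374 ≤ q) :
    ∏ p ∈ s, weight (3 / 4) p ≤ 0.0663 ∧ ∏ p ∈ s, weight (1 / 2) p ≤ 0.00302 := by
  obtain ⟨hFq, hGq⟩ := weight_le_of_3374_le (q := q) (by exact_mod_cast hq3374)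
  obtain ⟨hF, hG⟩ := prod_weight_le_of_odd_prime (s := s.erase q)
    (by rw [card_erase_of_mem hq, h]) fun p hp => hs p (mem_of_mem_erase hp)
  rw [← mul_prod_erase _ _ hq, ← mul_prod_erase _ _ hq]
  exact ⟨(mul_le_mul hFq hF (prod_nonneg fun p _ => weight_nonneg _ (Nat.cast_nonneg p))
      (by norm_num)).trans (by norm_num),
    (mul_le_mul hGq hG (prod_nonneg fun p _ => weight_nonneg _ (Nat.cast_nonneg p))
      (by norm_num)).trans (by norm_num)⟩

theorem key_inequality_omega_eq_5_general (N : ℕ) (hodd : Odd N)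
    (hω : N.primeFactors.card = 5)
    (hP : (∀ p ∈ N.primeFactors, 13 ≤ p) ∨ (∃ p ∈ N.primeFactors, 3373 < p)) :
    10 / (3 * Real.pi) *
        ((∏ p ∈ N.primeFactors, (2 + (p : ℝ) ^ ((3 : ℝ) / 4)) / (1 + (p : ℝ))) +
          3 * ∏ p ∈ N.primeFactors, (2 + (p : ℝ) ^ ((1 : ℝ) / 2)) / (1 + (p : ℝ))) <
      1 / 12 := by
  change 10 / (3 * Real.pi) * (∏ p ∈ N.primeFactors, weight (3 / 4) p +
    3 * ∏ p ∈ N.primeFactors, weight (1 / 2) p) < 1 / 12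
  have hoddPrime : ∀ p ∈ N.primeFactors, p.Prime ∧ Odd p := fun p hp =>
    ⟨Nat.prime_of_mem_primeFactors hp, hodd.of_dvd_nat (Nat.dvd_of_mem_primeFactors hp)⟩
  obtain ⟨hF, hG⟩ : ∏ p ∈ N.primeFactors, weight (3 / 4) p ≤ 0.0663 ∧
      ∏ p ∈ N.primeFactors, weight (1 / 2) p ≤ 0.00302 := by
    rcases hP with hall | ⟨q, hq, hq3373⟩
    · exact (prod_weight_le_of_forall_thirteen_le hω fun p hp =>
        ⟨(hoddPrime p hp).1, (hoddPrime p hp).2, hall p hp⟩).imp (·.trans (by norm_num)) id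
    · exact prod_weight_le_of_mem_of_3374_le hω hoddPrime hq hq3373
  have hF0 : 0 ≤ ∏ p ∈ N.primeFactors, weight (3 / 4) p :=
    prod_nonneg fun p _ => weight_nonneg _ (Nat.cast_nonneg p)
  have hG0 : 0 ≤ ∏ p ∈ N.primeFactors, weight (1 / 2) p :=
    prod_nonneg fun p _ => weight_nonneg _ (Nat.cast_nonneg p)
  rw [div_mul_eq_mul_div, div_lt_iff₀ (by positivity)]
  nlinarith [Real.pi_gt_d2]

/-- For an odd squarefree integer `N` with exactly `5` distinct prime factors whose smallest
prime factor is at least `13` or whose largest prime factor is greater than `3373`, the key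
inequality holds. -/
theorem key_inequality_omega_eq_5 (N : ℕ) (hodd : Odd N) (hsf : Squarefree N)
    (hω : N.primeFactors.card = 5)
    (hP : (∀ p ∈ N.primeFactors, 13 ≤ p) ∨ (∃ p ∈ N.primeFactors, 3373 < p)) :
    10 / (3 * Real.pi) *
        ((∏ p ∈ N.primeFactors, (2 + (p : ℝ) ^ ((3 : ℝ) / 4)) / (1 + (p : ℝ))) +
          3 * ∏ p ∈ N.primeFactors, (2 + (p : ℝ) ^ ((1 : ℝ) / 2)) / (1 + (p : ℝ))) <
      1 / 12 :=
  key_inequality_omega_eq_5_general N hodd hω hP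
end
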